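/- For every k ≥ 2, the minimum size of an identifying code of A_k is exactly 2k−1. -/

import Mathlib

open SimpleGraph

/-- The closed ball of radius 1 (closed neighborhood) of `x`. -/
def ball {V : Type*} (G : SimpleGraph V) (x : V) : Set V := {y | y = x ∨ G.Adj x y}

/-- `C` separates every pair of distinct vertices. -/
def IsSeparating {V : Type*} (G : SimpleGraph V) (C : Set V) : Prop :=
  ∀ x y : V, x ≠ y → _root_.ball G x ∩ C ≠ _root_.ball G y ∩ C

/-- `C` is an identifying code of `G`. -/
def IsIdCode {V : Type*} (G : SimpleGraph V) (C : Set V) : Prop :=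
  (∀ x : V, (_root_.ball G x ∩ C).Nonempty) ∧ IsSeparating G C

/-- A graph is twin-free if distinct vertices have distinct closed neighborhoods. -/
def TwinFree {V : Type*} (G : SimpleGraph V) : Prop :=
  ∀ x y : V, _root_.ball G x = _root_.ball G y → x = y

/-- The minimum size of an identifying code. -/
noncomputable def gammaID {V : Type*} (G : SimpleGraph V) : ℕ :=
  sInf {n | ∃ C : Set V, IsIdCode G C ∧ C.ncard = n}

/-- The minimum size of a separating set. -/
noncomputable def gammaS {V : Type*} (G : SimpleGraph V) : ℕ :=
  sInf {n | ∃ C : Set V, IsSeparating G C ∧ C.ncard = n}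

/-- The graph `A_k` on vertices `x_1,…,x_{2k}` (indexed `0,…,2k-1`):
`x_i` adjacent to `x_j` iff `i ≠ j` and `|i - j| ≤ k - 1`. -/
def Agraph (k : ℕ) : SimpleGraph (Fin (2 * k)) where
  Adj i j := i ≠ j ∧ ((i : ℤ) - (j : ℤ)).natAbs ≤ k - 1
  symm := by
    refine ⟨?_⟩
    intro i j h
    refine ⟨h.1.symm, ?_⟩
    have : ((j : ℤ) - (i : ℤ)).natAbs = ((i : ℤ) - (j : ℤ)).natAbs := by
      rw [← Int.natAbs_neg]; ring_nf
    omega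
  loopless := by refine ⟨?_⟩; intro i h; exact h.1 rfl

/-- The join of two graphs. -/
def joinG {α β : Type*} (G₁ : SimpleGraph α) (G₂ : SimpleGraph β) : SimpleGraph (α ⊕ β) where
  Adj x y := match x, y with
    | Sum.inl a, Sum.inl b => G₁.Adj a b
    | Sum.inr a, Sum.inr b => G₂.Adj a b
    | _, _ => True
  symm := by refine ⟨?_⟩; rintro (a | a) (b | b) h <;> first | exact h.symm | trivial
  loopless := by
    refine ⟨?_⟩
    rintro (a | a) h
    · exact G₁.irrefl h
    · exact G₂.irrefl h

/-- The star `K_{1,t}`: vertex `0` is the center, adjacent to all other vertices. -/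
def starGraph (t : ℕ) : SimpleGraph (Fin (t + 1)) where
  Adj i j := i ≠ j ∧ (i = 0 ∨ j = 0)
  symm := by refine ⟨?_⟩; rintro i j ⟨h1, h2⟩; exact ⟨h1.symm, h2.symm⟩
  loopless := by refine ⟨?_⟩; rintro i ⟨h1, _⟩; exact h1 rfl


/-! In `A_k` the ball of `x_i` is the interval `[i - k + 1, i + k - 1]` cut to `[0, 2k - 1]`.
For `1 ≤ j ≤ 2k - 2` the balls of `x_{j-k}, x_{j-k+1}` (or of `x_{j+k-1}, x_{j+k}`) differ only in
`x_j`, so every separating set contains all inner vertices; the balls of `x_{k-1}, x_k` differ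
only in the two endpoints, so it contains one endpoint as well. Conversely, all vertices but one
endpoint form an identifying code. -/

lemma gammaID_eq_ncard_of_isIdCode {V : Type*} {G : SimpleGraph V} {C₀ : Set V}
    (hC₀ : IsIdCode G C₀) (hmin : ∀ C, IsIdCode G C → C₀.ncard ≤ C.ncard) :
    gammaID G = C₀.ncard :=
  le_antisymm (Nat.sInf_le ⟨C₀, hC₀, rfl⟩)
    (le_csInf ⟨_, C₀, hC₀, rfl⟩ (by rintro _ ⟨C, hC, rfl⟩; exact hmin C hC))

lemma isSeparating_iff_exists_mem_not_iff {V : Type*} {G : SimpleGraph V} {C : Set V} :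
    IsSeparating G C ↔ ∀ u v, u ≠ v → ∃ w ∈ C, ¬(w ∈ _root_.ball G u ↔ w ∈ _root_.ball G v) := by
  refine forall₂_congr fun u v => imp_congr_right fun _ => ?_
  rw [ne_eq, Set.ext_iff]
  simp only [Set.mem_inter_iff, and_congr_left_iff, not_forall, exists_prop]

lemma IsSeparating.exists_mem_not_iff {V : Type*} {G : SimpleGraph V} {C : Set V}
    (hC : IsSeparating G C) {u v : V} (huv : u ≠ v) :
    ∃ w ∈ C, ¬(w ∈ _root_.ball G u ↔ w ∈ _root_.ball G v) :=
  isSeparating_iff_exists_mem_not_iff.mp hC u v huv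

lemma ncard_compl_singleton {V : Type*} [Finite V] (v : V) :
    ({v}ᶜ : Set V).ncard = Nat.card V - 1 := by
  rw [Set.ncard_compl, Set.ncard_singleton]

lemma Agraph_mem_ball_iff {k : ℕ} (x y : Fin (2 * k)) :
    y ∈ _root_.ball (Agraph k) x ↔ (x : ℕ) ≤ y + (k - 1) ∧ (y : ℕ) ≤ x + (k - 1) := by
  simp only [_root_.ball, Agraph, Set.mem_ofPred_eq, ne_eq, Fin.ext_iff]
  omega

lemma Agraph_isIdCode_compl_last {k : ℕ} (hk : 2 ≤ k) :
    IsIdCode (Agraph k) {⟨2 * k - 1, by omega⟩}ᶜ := by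
  refine ⟨fun x => ?_, isSeparating_iff_exists_mem_not_iff.mpr fun x y hxy => ?_⟩
  all_goals simp only [Set.inter_nonempty, Set.mem_compl_singleton_iff, ne_eq, Fin.ext_iff,
    Agraph_mem_ball_iff]
  · by_cases hx : (x : ℕ) = 2 * k - 1
    · exact ⟨⟨2 * k - 2, by omega⟩, by simp only; omega⟩
    · exact ⟨x, by omega⟩
  · have := x.isLt; have := y.isLt
    have hxy : (x : ℕ) ≠ y := Fin.val_ne_iff.mpr hxy
    -- an end of one ball that sticks out of the other one
    rcases Nat.lt_or_gt_of_ne hxy with h | h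
    · by_cases hy : (y : ℕ) ≤ k - 1
      · exact ⟨⟨y + k - 1, by omega⟩, by simp only; omega⟩
      · exact ⟨⟨x + 1 - k, by omega⟩, by simp only; omega⟩
    · by_cases hx : (x : ℕ) ≤ k - 1
      · exact ⟨⟨x + k - 1, by omega⟩, by simp only; omega⟩
      · exact ⟨⟨y + 1 - k, by omega⟩, by simp only; omega⟩

section Separating

variable {k : ℕ} {C : Set (Fin (2 * k))}

lemma Agraph_mem_of_isSeparating (hC : IsSeparating (Agraph k) C) (j : Fin (2 * k))
    (hj₁ : 1 ≤ (j : ℕ)) (hj₂ : (j : ℕ) ≤ 2 * k - 2) : j ∈ C := by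
  -- `j` is the only vertex telling apart `j - k` from `j - k + 1`, resp. `j + k - 1` from `j + k`
  obtain ⟨w, hwC, hw⟩ : ∃ w ∈ C, (w : ℕ) = j := by
    rcases le_or_gt k (j : ℕ) with hkj | hkj
    · obtain ⟨w, hwC, hw⟩ := hC.exists_mem_not_iff (u := ⟨j - k, by omega⟩)
        (v := ⟨j - k + 1, by omega⟩) (by simp [Fin.ext_iff])
      simp only [Agraph_mem_ball_iff] at hw
      exact ⟨w, hwC, by have := w.isLt; omega⟩
    · obtain ⟨w, hwC, hw⟩ := hC.exists_mem_not_iff (u := ⟨j + k - 1, by omega⟩)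
        (v := ⟨j + k, by omega⟩) (by simp only [ne_eq, Fin.ext_iff]; omega)
      simp only [Agraph_mem_ball_iff] at hw
      exact ⟨w, hwC, by omega⟩
  rwa [← Fin.ext hw]

lemma Agraph_exists_endpoint_mem_of_isSeparating (hk : 1 ≤ k) (hC : IsSeparating (Agraph k) C) :
    ∃ w ∈ C, (w : ℕ) = 0 ∨ (w : ℕ) = 2 * k - 1 := by
  obtain ⟨w, hwC, hw⟩ := hC.exists_mem_not_iff (u := ⟨k - 1, by omega⟩) (v := ⟨k, by omega⟩)
    (by simp only [ne_eq, Fin.ext_iff]; omega)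
  simp only [Agraph_mem_ball_iff] at hw
  exact ⟨w, hwC, by have := w.isLt; omega⟩

lemma Agraph_exists_compl_singleton_subset_of_isSeparating (hk : 1 ≤ k)
    (hC : IsSeparating (Agraph k) C) : ∃ v, {v}ᶜ ⊆ C := by
  obtain ⟨w, hwC, hw⟩ := Agraph_exists_endpoint_mem_of_isSeparating hk hC
  refine ⟨⟨2 * k - 1 - w, by omega⟩, fun z hz => ?_⟩
  rw [Set.mem_compl_singleton_iff, ne_eq, Fin.ext_iff] at hz
  by_cases hzw : z = w
  · rwa [hzw]
  · have := z.isLt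
    exact Agraph_mem_of_isSeparating hC z (by grind) (by grind)

end Separating

theorem stmt7 (k : ℕ) (hk : 2 ≤ k) : gammaID (Agraph k) = 2 * k - 1 := by
  have hcard : ∀ v : Fin (2 * k), ({v}ᶜ : Set (Fin (2 * k))).ncard = 2 * k - 1 := fun v => by
    rw [ncard_compl_singleton, Nat.card_fin]
  rw [← hcard ⟨2 * k - 1, by omega⟩]
  refine gammaID_eq_ncard_of_isIdCode (Agraph_isIdCode_compl_last hk) fun C hC => ?_
  obtain ⟨v, hv⟩ := Agraph_exists_compl_singleton_subset_of_isSeparating (by omega) hC.2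
  calc _ = ({v}ᶜ : Set (Fin (2 * k))).ncard := by rw [hcard, hcard]
    _ ≤ C.ncard := Set.ncard_le_ncard hv
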